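/- arXiv:1103.1057 — 3 statements merged into one kernel-verified Lean document; each statement's English description precedes it below -/
import Mathlib

section
/- Let e_1 ≠ e_2 be hyperedges in the hypergraph H = (V, E) (with Bip H connected), let E_0 = E ∖ {e_1, e_2}, fix a function f_0 : E_0 → ℕ, and let f_1 and f_2 be hypertrees of H extending f_0 with f_1(e_1) > f_2(e_1). Let x ∈ E_0. Then: (1) if f_1 is such that a transfer of valence is possible from e_1 to x, then f_2 is such that a transfer of valence is possible from e_2 to x; (2) if f_1 is such that a transfer of valence is possible from x to e_2, then f_2 is such that a transfer of valence is possible from x to e_1. -/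
/-!
Hypertrees have the exchange property: if `p` and `q` are hypertrees with `q a < p a`, then for
some `b` with `p b < q b`, moving one unit of valence of `p` from `a` to `b` gives a hypertree.
It comes from the exchange property of spanning trees of `Bip H`: an edge at `a` of a tree `T`
realizing `p` that is missing from a tree `T'` realizing `q` can be traded for an edge of `T'`, and
since every edge of `Bip H` has exactly one hyperedge endpoint, only the valences of `a` and of one
hyperedge `b` change; if `b` is not yet suitable, repeat from `b`, with `T` one edge closer to `T'`.

In the staple situation the hypertrees involved differ in so few coordinates that the exchange
has no choice for `b`, except in (1) where it may move valence from `e₂` to `e₁`; this brings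
`f₂` closer to `f₁`, and one concludes by induction on `f₁ e₁ - f₂ e₁`.
-/

open SimpleGraph Finset
open scoped Classical

noncomputable section

variable {α β : Type} [DecidableEq α] [DecidableEq β]

/-- A hypergraph: a finite set `V` of vertices, a finite (index) set `E` of hyperedges,
where the hyperedge indexed by `e ∈ E` is the nonempty set `incid e ⊆ V` of its vertices.
(Indexing hyperedges by a type allows multiset multiplicities, as in the paper.) -/
structure Hypergraph' (α β : Type) where
  V : Finset α
  E : Finset β
  incid : β → Finset α
  incid_sub : ∀ e ∈ E, incid e ⊆ V
  incid_nonempty : ∀ e ∈ E, (incid e).Nonempty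

/-- The degree (valence) of a vertex in a graph. -/
def degr {W : Type} (T : SimpleGraph W) (x : W) : ℕ := (T.neighborSet x).ncard

/-- Nullity (first Betti number) of a graph: #edges − #vertices + #components. -/
def nullity {W : Type} (G : SimpleGraph W) : ℕ :=
  G.edgeSet.ncard + Nat.card G.ConnectedComponent - Nat.card W

/-- The result of transferring one unit of valence from `a` to `b`. -/
def transferFun (f : β → ℕ) (a b : β) : β → ℕ :=
  fun x => if x = a then f a - 1 else if x = b then f b + 1 else f x

namespace Hypergraph'

variable (H : Hypergraph' α β)

/-- The bipartite graph associated to a hypergraph: color classes `V` and `E`,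
with `v` joined to `e` iff `v ∈ incid e`. -/
def Bip : SimpleGraph (↥H.V ⊕ ↥H.E) :=
  SimpleGraph.fromRel (fun x y =>
    ∃ (v : ↥H.V) (e : ↥H.E), x = Sum.inl v ∧ y = Sum.inr e ∧ (v : α) ∈ H.incid (e : β))

/-- A spanning tree of the associated bipartite graph. -/
def IsSpanningTree (T : SimpleGraph (↥H.V ⊕ ↥H.E)) : Prop :=
  T ≤ H.Bip ∧ T.IsTree

/-- `T` is a spanning tree of `Bip H` realizing the vector `f` (a function on the
hyperedges, encoded as a function on `β` vanishing off `E`): `T` has degree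
`f e + 1` at each hyperedge `e`. -/
def Realizes (T : SimpleGraph (↥H.V ⊕ ↥H.E)) (f : β → ℕ) : Prop :=
  H.IsSpanningTree T ∧ (∀ e, e ∉ H.E → f e = 0) ∧
    ∀ e : ↥H.E, degr T (Sum.inr e) = f (e : β) + 1

/-- A hypertree is a vector realized by some spanning tree of `Bip H`. -/
def IsHypertree (f : β → ℕ) : Prop := ∃ T, H.Realizes T f

/-- The bipartite graph `Bip H |_{E'}` induced by a subset `E'` of hyperedges:
color classes `∪E'` and `E'`. -/
def BipOn (E' : Finset β) : SimpleGraph (↥(E'.biUnion H.incid) ⊕ ↥E') :=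
  SimpleGraph.fromRel (fun x y =>
    ∃ (v : ↥(E'.biUnion H.incid)) (e : ↥E'),
      x = Sum.inl v ∧ y = Sum.inr e ∧ (v : α) ∈ H.incid (e : β))

/-- `c(E')`: the number of connected components of `Bip H |_{E'}`. -/
def compCount (E' : Finset β) : ℕ := Nat.card (H.BipOn E').ConnectedComponent

/-- `μ(E') = |∪E'| − c(E')` (and `μ(∅) = 0`). -/
def mu (E' : Finset β) : ℤ :=
  ((E'.biUnion H.incid).card : ℤ) - (H.compCount E' : ℤ)

/-- `f` is such that a transfer of valence is possible from `a` to `b`. -/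
def TransferPossible (f : β → ℕ) (a b : β) : Prop :=
  0 < f a ∧ H.IsHypertree (transferFun f a b)

/-- `e` is internally active w.r.t. the hypertree `f` and the order `o`. -/
def InternallyActive (o : LinearOrder β) (f : β → ℕ) (e : β) : Prop :=
  ∀ x ∈ H.E, o.lt x e → ¬ H.TransferPossible f e x

/-- `e` is externally active w.r.t. the hypertree `f` and the order `o`. -/
def ExternallyActive (o : LinearOrder β) (f : β → ℕ) (e : β) : Prop :=
  ∀ x ∈ H.E, o.lt x e → ¬ H.TransferPossible f x e

/-- `ῑ(f)`: the number of internally inactive hyperedges w.r.t. `f`. -/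
def intInact (o : LinearOrder β) (f : β → ℕ) : ℕ :=
  (H.E.filter (fun e => ¬ H.InternallyActive o f e)).card

/-- `ε̄(f)`: the number of externally inactive hyperedges w.r.t. `f`. -/
def extInact (o : LinearOrder β) (f : β → ℕ) : ℕ :=
  (H.E.filter (fun e => ¬ H.ExternallyActive o f e)).card

end Hypergraph'

namespace SimpleGraph

variable {W : Type*} {G T T' : SimpleGraph W}

lemma reachable_deleteEdges_or_of_reachable {u v w : W} (h : G.Reachable w u) :
    (G.deleteEdges {s(u, v)}).Reachable w u ∨ (G.deleteEdges {s(u, v)}).Reachable w v := by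
  by_contra! hw
  obtain ⟨p⟩ := h
  obtain ⟨⟨⟨x, y⟩, hxy⟩, -, hx, hy⟩ :=
    p.exists_boundary_dart {z | (G.deleteEdges {s(u, v)}).Reachable w z} .rfl hw.1
  have hx : (G.deleteEdges {s(u, v)}).Reachable w x := hx
  have hy : ¬ (G.deleteEdges {s(u, v)}).Reachable w y := hy
  by_cases he : s(x, y) = s(u, v)
  · rcases Sym2.eq_iff.mp he with ⟨rfl, -⟩ | ⟨rfl, -⟩
    exacts [hw.1 hx, hw.2 hx]
  · exact hy (hx.trans (deleteEdges_adj.mpr ⟨hxy, by simpa using he⟩).reachable)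

lemma edgeSet_deleteEdges_sup_edge {c d : W} (hcd : c ≠ d) (e : Sym2 W) :
    (G.deleteEdges {e} ⊔ edge c d).edgeSet = insert s(c, d) (G.edgeSet \ {e}) := by
  rw [edgeSet_sup, edgeSet_deleteEdges, edgeSet_edge_of_ne hcd, Set.union_singleton]

lemma IsTree.exists_isTree_deleteEdges_sup_edge [Finite W] (hT : T.IsTree) (hT' : T'.IsTree)
    {u v : W} (huv : T.Adj u v) (huv' : ¬ T'.Adj u v) :
    ∃ c d, T'.Adj c d ∧ ¬ T.Adj c d ∧ (T.deleteEdges {s(u, v)} ⊔ edge c d).IsTree := by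
  set D := T.deleteEdges {s(u, v)}
  have hsplit : ∀ w, D.Reachable w u ∨ D.Reachable w v :=
    fun w ↦ reachable_deleteEdges_or_of_reachable (hT.connected.preconnected w u)
  have huv_D : ¬ D.Reachable u v := isAcyclic_iff_forall_adj_isBridge.mp hT.isAcyclic huv
  obtain ⟨p⟩ := hT'.connected.preconnected u v
  obtain ⟨⟨⟨c, d⟩, hcd⟩, -, hc, hd⟩ := p.exists_boundary_dart {z | D.Reachable u z} .rfl huv_D
  have hcd : T'.Adj c d := hcd
  have hc : D.Reachable u c := hc
  have hd : ¬ D.Reachable u d := hd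
  have hcd_T : ¬ T.Adj c d := fun h ↦ by
    refine hd (hc.trans (deleteEdges_adj.mpr ⟨h, ?_⟩).reachable)
    rintro (he : s(c, d) = s(u, v))
    rcases Sym2.eq_iff.mp he with ⟨rfl, rfl⟩ | ⟨rfl, rfl⟩
    exacts [huv' hcd, huv' hcd.symm]
  refine ⟨c, d, hcd, hcd_T, isTree_iff_connected_and_card.mpr ⟨?_, ?_⟩⟩
  · have hle : D ≤ D ⊔ edge c d := le_sup_left
    have hdv : D.Reachable d v := (hsplit d).resolve_left fun h ↦ hd h.symm
    have hvu : (D ⊔ edge c d).Reachable v u :=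
      ((hdv.mono hle).symm.trans (sup_adj _ _ _ _ |>.mpr <| .inr <|
        (edge_adj _ _ _ _).mpr ⟨.inl ⟨rfl, rfl⟩, hcd.ne⟩).reachable.symm).trans (hc.mono hle).symm
    have hu : ∀ w, (D ⊔ edge c d).Reachable w u := fun w ↦
      (hsplit w).elim (·.mono hle) fun h ↦ (h.mono hle).trans hvu
    have : Nonempty W := ⟨u⟩
    exact ⟨fun a b ↦ (hu a).trans (hu b).symm⟩
  · rw [← (isTree_iff_connected_and_card.mp hT).2, Nat.card_coe_set_eq, Nat.card_coe_set_eq,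
      edgeSet_deleteEdges_sup_edge hcd.ne, Set.ncard_exchange (s := T.edgeSet) hcd_T huv]

end SimpleGraph

lemma degr_eq_sum_edgeFinset {W : Type} [Fintype W] (G : SimpleGraph W) (w : W) :
    degr G w = ∑ e ∈ G.edgeFinset, if w ∈ e then 1 else 0 := by
  rw [degr, ← Finset.card_filter, ← SimpleGraph.incidenceFinset_eq_filter,
    SimpleGraph.card_incidenceFinset_eq_degree, ← SimpleGraph.card_neighborFinset_eq_degree,
    SimpleGraph.neighborFinset_def, Set.ncard_eq_toFinset_card']

lemma degr_add_ite_of_edgeSet_eq_insert {W : Type} [Finite W] {A B : SimpleGraph W}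
    {x y : Sym2 W} (hx : x ∈ A.edgeSet) (hy : y ∉ A.edgeSet)
    (hB : B.edgeSet = insert y (A.edgeSet \ {x})) (w : W) :
    degr B w + (if w ∈ x then 1 else 0) = degr A w + (if w ∈ y then 1 else 0) := by
  have := Fintype.ofFinite W
  have hB' : B.edgeFinset = insert y (A.edgeFinset.erase x) := by
    ext e
    simp [hB, and_comm]
  rw [degr_eq_sum_edgeFinset, degr_eq_sum_edgeFinset, hB', Finset.sum_insert (by simp [hy]),
    add_assoc, Finset.sum_erase_add _ _ (by simpa using hx), add_comm]

section transferFun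

variable {f : β → ℕ} {a b c x : β}

@[simp] lemma transferFun_apply_left : transferFun f a b a = f a - 1 := if_pos rfl

@[simp] lemma transferFun_apply_right (hba : b ≠ a) : transferFun f a b b = f b + 1 := by
  simp [transferFun, hba]

lemma transferFun_apply_of_ne (hxa : x ≠ a) (hxb : x ≠ b) : transferFun f a b x = f x := by
  simp [transferFun, hxa, hxb]

lemma transferFun_transferFun (hab : a ≠ b) (hbc : b ≠ c) (hca : c ≠ a) :
    transferFun (transferFun f a b) b c = transferFun f a c := by
  funext y
  unfold transferFun
  split_ifs <;> simp_all

lemma transferFun_add_ite (ha : 0 < f a) (hab : a ≠ b) (x : β) :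
    transferFun f a b x + (if x = a then 1 else 0) = f x + (if x = b then 1 else 0) := by
  unfold transferFun
  split_ifs <;> simp_all
  omega

end transferFun

namespace Hypergraph'

variable {α β : Type} {H : Hypergraph' α β}

lemma exists_eq_bip_edge {T : SimpleGraph (↥H.V ⊕ ↥H.E)} (hT : T ≤ H.Bip) {p q : ↥H.V ⊕ ↥H.E}
    (h : T.Adj p q) :
    ∃ (v : ↥H.V) (e : ↥H.E), s(p, q) = s(Sum.inl v, Sum.inr e) := by
  obtain ⟨-, ⟨v, e, rfl, rfl, -⟩ | ⟨v, e, rfl, rfl, -⟩⟩ := (fromRel_adj _ _ _).mp (hT h)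
  exacts [⟨v, e, rfl⟩, ⟨v, e, Sym2.eq_swap⟩]

lemma IsSpanningTree.exists_exchange {T T' : SimpleGraph (↥H.V ⊕ ↥H.E)}
    (hT : H.IsSpanningTree T) (hT' : H.IsSpanningTree T')
    {a : ↥H.E} (ha : degr T' (.inr a) < degr T (.inr a)) :
    ∃ (b : ↥H.E) (T₁ : SimpleGraph (↥H.V ⊕ ↥H.E)), H.IsSpanningTree T₁ ∧
      (T₁.edgeSet \ T'.edgeSet).ncard < (T.edgeSet \ T'.edgeSet).ncard ∧
      ∀ e : ↥H.E, degr T₁ (.inr e) + (if e = a then 1 else 0) =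
        degr T (.inr e) + (if e = b then 1 else 0) := by
  obtain ⟨z, hz, hz'⟩ : ∃ z, T.Adj (.inr a) z ∧ ¬ T'.Adj (.inr a) z := by
    by_contra! h
    exact ha.not_ge (Set.ncard_le_ncard fun z hz ↦ h z hz)
  obtain ⟨c, d, hcd, hcd', htree⟩ := hT.2.exists_isTree_deleteEdges_sup_edge hT'.2 hz hz'
  set T₁ := T.deleteEdges {s(.inr a, z)} ⊔ edge c d
  have hedges : T₁.edgeSet = insert s(c, d) (T.edgeSet \ {s(.inr a, z)}) :=
    edgeSet_deleteEdges_sup_edge hcd.ne _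
  have hdiff : T₁.edgeSet \ T'.edgeSet = (T.edgeSet \ T'.edgeSet) \ {s(.inr a, z)} := by
    rw [hedges, Set.insert_sdiff_of_mem _ (show s(c, d) ∈ T'.edgeSet from hcd),
      Set.sdiff_sdiff_comm]
  obtain ⟨v, a', hz_eq⟩ := exists_eq_bip_edge hT.1 hz
  obtain ⟨_, b, hcd_eq⟩ := exists_eq_bip_edge hT'.1 hcd
  obtain ⟨rfl, rfl⟩ : a = a' ∧ z = .inl v := by simpa [Sym2.eq_iff] using hz_eq
  refine ⟨b, T₁, ⟨sup_le (deleteEdges_le _ |>.trans hT.1) ((edge_le_iff _).mpr (.inr (hT'.1 hcd))),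
    htree⟩, ?_, fun e ↦ ?_⟩
  · rw [hdiff]
    exact Set.ncard_sdiff_singleton_lt_of_mem ⟨hz, hz'⟩
  · have := degr_add_ite_of_edgeSet_eq_insert hz hcd' hedges (.inr e)
    simpa [hcd_eq] using this

lemma Realizes.of_degr_add {T T₁ : SimpleGraph (↥H.V ⊕ ↥H.E)} {p p₁ : β → ℕ} (hT : H.Realizes T p)
    (hT₁ : H.IsSpanningTree T₁) (hp₁ : ∀ e, e ∉ H.E → p₁ e = 0)
    (hdeg : ∀ e : ↥H.E, degr T₁ (.inr e) + p e = degr T (.inr e) + p₁ e) :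
    H.Realizes T₁ p₁ :=
  ⟨hT₁, hp₁, fun e ↦ by have := hdeg e; rw [hT.2.2 e] at this; omega⟩

theorem Realizes.exists_transfer [DecidableEq β] {T T' : SimpleGraph (↥H.V ⊕ ↥H.E)}
    {p q : β → ℕ} {a : β} (hT : H.Realizes T p) (hT' : H.Realizes T' q) (h : q a < p a) :
    ∃ b, p b < q b ∧ H.IsHypertree (transferFun p a b) := by
  have ha : a ∈ H.E := by_contra fun ha ↦ by have := hT.2.1 a ha; omega
  obtain ⟨⟨b, hb⟩, T₁, hT₁, hlt, hdeg⟩ := hT.1.exists_exchange hT'.1 (a := ⟨a, ha⟩)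
    (by rw [hT.2.2, hT'.2.2]; exact Nat.add_lt_add_right h 1)
  simp only [Subtype.ext_iff] at hdeg
  by_cases hba : b = a
  · subst hba
    exact (hT.of_degr_add hT₁ hT.2.1 fun e ↦ by have := hdeg e; omega).exists_transfer hT' h
  have hT₁' : H.Realizes T₁ (transferFun p a b) := by
    refine hT.of_degr_add hT₁ (fun e he ↦ ?_) fun e ↦ ?_
    · rw [transferFun_apply_of_ne (ne_of_mem_of_not_mem ha he).symm
        (ne_of_mem_of_not_mem hb he).symm, hT.2.1 e he]
    · have := transferFun_add_ite (show 0 < p a by omega) (Ne.symm hba) (e : β)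
      have := hdeg e
      omega
  by_cases hpq : p b < q b
  · exact ⟨b, hpq, T₁, hT₁'⟩
  obtain ⟨c, hc, hc'⟩ :=
    hT₁'.exists_transfer hT' (a := b) (by rw [transferFun_apply_right hba]; omega)
  have hcb : c ≠ b := by rintro rfl; rw [transferFun_apply_right hba] at hc; omega
  have hca : c ≠ a := by rintro rfl; rw [transferFun_apply_left] at hc; omega
  refine ⟨c, by rwa [transferFun_apply_of_ne hca hcb] at hc, ?_⟩
  rwa [transferFun_transferFun (Ne.symm hba) (Ne.symm hcb) hca] at hc'
termination_by (T.edgeSet \ T'.edgeSet).ncard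

variable {p q : β → ℕ}

theorem IsHypertree.exists_transfer [DecidableEq β] (hp : H.IsHypertree p)
    (hq : H.IsHypertree q) {a : β} (h : q a < p a) :
    ∃ b, p b < q b ∧ H.IsHypertree (transferFun p a b) :=
  let ⟨_, hT⟩ := hp; let ⟨_, hT'⟩ := hq; hT.exists_transfer hT' h

lemma IsHypertree.transfer_of_forall_lt_imp_eq [DecidableEq β] (hp : H.IsHypertree p)
    (hq : H.IsHypertree q) {a b : β} (h : q a < p a) (hb : ∀ y, p y < q y → y = b) :
    p b < q b ∧ H.IsHypertree (transferFun p a b) := by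
  obtain ⟨c, hc, hc'⟩ := hp.exists_transfer hq h
  obtain rfl := hb c hc
  exact ⟨hc, hc'⟩

lemma IsHypertree.lt_of_lt_of_agree_off_pair (hp : H.IsHypertree p) (hq : H.IsHypertree q)
    {c d : β} (hagree : ∀ y, y ≠ c → y ≠ d → p y = q y) (h : q c < p c) : p d < q d := by
  refine (hp.transfer_of_forall_lt_imp_eq hq h fun y hy ↦ by_contra fun hyd ↦ ?_).1
  have hyc : y ≠ c := by rintro rfl; omega
  have := hagree y hyc hyd
  omega

variable [DecidableEq β] {f₁ : β → ℕ} {e₁ e₂ x : β}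

theorem TransferPossible.swap_target {f₂ : β → ℕ} (h₁ : H.IsHypertree f₁)
    (h₂ : H.IsHypertree f₂)
    (hagree : ∀ y, y ≠ e₁ → y ≠ e₂ → f₁ y = f₂ y) (hgt : f₂ e₁ < f₁ e₁)
    (hxe₁ : x ≠ e₁) (hxe₂ : x ≠ e₂) (h : H.TransferPossible f₁ x e₂) :
    H.TransferPossible f₂ x e₁ := by
  obtain ⟨hpos, hg⟩ := h
  have hx := hagree x hxe₁ hxe₂
  have he₂ := h₁.lt_of_lt_of_agree_off_pair h₂ hagree hgt
  refine ⟨hx ▸ hpos, (h₂.transfer_of_forall_lt_imp_eq hg ?_ fun y hy ↦ ?_).2⟩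
  · rw [transferFun_apply_left]; omega
  · by_contra hye₁
    unfold transferFun at hy
    split_ifs at hy with hyx hye₂
    · subst hyx; omega
    · subst hye₂; omega
    · have := hagree y hye₁ hye₂; omega

theorem TransferPossible.swap_source {f₂ : β → ℕ} (h₁ : H.IsHypertree f₁)
    (h₂ : H.IsHypertree f₂)
    (hagree : ∀ y, y ≠ e₁ → y ≠ e₂ → f₁ y = f₂ y) (hgt : f₂ e₁ < f₁ e₁) (hne : e₁ ≠ e₂)
    (hxe₁ : x ≠ e₁) (hxe₂ : x ≠ e₂) (h : H.TransferPossible f₁ e₁ x) :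
    H.TransferPossible f₂ e₂ x := by
  obtain ⟨hpos, hg⟩ := h
  have he₂ := h₁.lt_of_lt_of_agree_off_pair h₂ hagree hgt
  obtain ⟨b, hb, hb'⟩ := h₂.exists_transfer hg (a := e₂)
    (by rwa [transferFun_apply_of_ne hne.symm hxe₂.symm])
  have hb_cases : b = x ∨ b = e₁ := by
    by_contra! hb_ne
    unfold transferFun at hb
    split_ifs at hb with hbe₁ hbx
    · exact hb_ne.2 hbe₁
    · exact hb_ne.1 hbx
    · by_cases hbe₂ : b = e₂
      · subst hbe₂; omega
      · have := hagree b hbe₁ hbe₂; omega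
  obtain rfl | hbe₁ := hb_cases
  · exact ⟨by omega, hb'⟩
  rw [hbe₁] at hb hb'
  have hagree' : ∀ y, y ≠ e₁ → y ≠ e₂ → f₁ y = transferFun f₂ e₂ e₁ y := fun y hy₁ hy₂ ↦ by
    rw [transferFun_apply_of_ne hy₂ hy₁, hagree y hy₁ hy₂]
  have hgt' : transferFun f₂ e₂ e₁ e₁ < f₁ e₁ := by
    rw [transferFun_apply_right hne]; rw [transferFun_apply_left] at hb; omega
  -- the decrease of the termination measure, for the recursive call below
  have hdec : f₁ e₁ - transferFun f₂ e₂ e₁ e₁ < f₁ e₁ - f₂ e₁ := by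
    rw [transferFun_apply_right hne]; omega
  obtain ⟨hpos', hh⟩ := TransferPossible.swap_source h₁ hb' hagree' hgt' hne hxe₁ hxe₂ ⟨hpos, hg⟩
  rw [transferFun_apply_left] at hpos'
  obtain ⟨-, hfin⟩ := hh.transfer_of_forall_lt_imp_eq h₂ (a := e₁) (b := e₂)
    (by unfold transferFun; simp [hne, hxe₁.symm])
    (fun y hy ↦ by
      by_contra hy₂
      unfold transferFun at hy
      split_ifs at hy <;> simp_all)
  have : transferFun (transferFun (transferFun f₂ e₂ e₁) e₂ x) e₁ e₂ = transferFun f₂ e₂ x := by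
    funext y
    unfold transferFun
    split_ifs <;> simp_all
    omega
  exact ⟨by omega, this ▸ hfin⟩
termination_by f₁ e₁ - f₂ e₁

end Hypergraph'

theorem staple_general (H : Hypergraph' α β)
    (e₁ e₂ : β) (hne : e₁ ≠ e₂)
    (f₁ f₂ : β → ℕ) (h₁ : H.IsHypertree f₁) (h₂ : H.IsHypertree f₂)
    (hagree : ∀ y, y ≠ e₁ → y ≠ e₂ → f₁ y = f₂ y)
    (hgt : f₂ e₁ < f₁ e₁)
    (x : β) (hxe₁ : x ≠ e₁) (hxe₂ : x ≠ e₂) :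
    (H.TransferPossible f₁ e₁ x → H.TransferPossible f₂ e₂ x) ∧
    (H.TransferPossible f₁ x e₂ → H.TransferPossible f₂ x e₁) :=
  ⟨Hypergraph'.TransferPossible.swap_source h₁ h₂ hagree hgt hne hxe₁ hxe₂,
    Hypergraph'.TransferPossible.swap_target h₁ h₂ hagree hgt hxe₁ hxe₂⟩

/-- staple lemma. -/
theorem staple (H : Hypergraph' α β) (hconn : H.Bip.Connected)
    (e₁ e₂ : β) (he₁ : e₁ ∈ H.E) (he₂ : e₂ ∈ H.E) (hne : e₁ ≠ e₂)
    (f₁ f₂ : β → ℕ) (h₁ : H.IsHypertree f₁) (h₂ : H.IsHypertree f₂)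
    (hagree : ∀ y, y ≠ e₁ → y ≠ e₂ → f₁ y = f₂ y)
    (hgt : f₂ e₁ < f₁ e₁)
    (x : β) (hx : x ∈ H.E) (hxe₁ : x ≠ e₁) (hxe₂ : x ≠ e₂) :
    (H.TransferPossible f₁ e₁ x → H.TransferPossible f₂ e₂ x) ∧
    (H.TransferPossible f₁ x e₂ → H.TransferPossible f₂ x e₁) :=
  staple_general H e₁ e₂ hne f₁ f₂ h₁ h₂ hagree hgt x hxe₁ hxe₂
end
end

section
/- For a hypergraph H = (V, E) with Bip H connected, the degree of its interior polynomial is at most min{|E|, |V|} − 1 and the degree of its exterior polynomial is at most |E| − 1; equivalently, for any linear order on E and any hypertree f, ῑ(f) ≤ min{|E|, |V|} − 1 and ε̄(f) ≤ |E| − 1. -/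
open SimpleGraph Finset
open scoped Classical

noncomputable section

variable {α β : Type} [DecidableEq α] [DecidableEq β]

/-! The least hyperedge is both internally and externally active, as nothing lies below it;
this gives the bound `|E| - 1` for both counts. A hyperedge `e` that can give away valence has
`f e ≥ 1`, so `ῑ(f) ≤ ∑ f = |V| - 1`: a spanning tree of `Bip H` has `|V| + |E| - 1` edges, and
each of them meets exactly one hyperedge. -/

theorem Finset.card_filter_le_card_sub_one_of_isLeast {γ : Type} [LinearOrder γ]
    {s : Finset γ} {q : γ → Prop} [DecidablePred q] (h : ∀ a, IsLeast (s : Set γ) a → ¬ q a) :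
    #(s.filter q) ≤ #s - 1 := by
  rcases s.eq_empty_or_nonempty with rfl | hs
  · simp
  · have hlt : #(s.filter q) < #s :=
      card_lt_card (filter_ssubset.2 ⟨s.min' hs, s.min'_mem hs, h _ (s.isLeast_min' hs)⟩)
    omega

theorem degr_eq_degree {W : Type} [Fintype W] (T : SimpleGraph W) [DecidableRel T.Adj] (x : W) :
    degr T x = T.degree x := by
  rw [degr, ← card_neighborFinset_eq_degree, neighborFinset, Set.ncard_eq_toFinset_card']

namespace Hypergraph'

omit [DecidableEq α]

variable {H : Hypergraph' α β}

section

omit [DecidableEq β]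

theorem isBipartiteWith_of_le_bip {T : SimpleGraph (↥H.V ⊕ ↥H.E)} (hT : T ≤ H.Bip) :
    T.IsBipartiteWith ↑(univ.map .inl : Finset (↥H.V ⊕ ↥H.E))
      ↑(univ.map .inr : Finset (↥H.V ⊕ ↥H.E)) where
  disjoint := by simp [Set.disjoint_left]
  mem_of_adj x y hxy := by
    obtain ⟨-, ⟨v, e, rfl, rfl, -⟩ | ⟨v, e, rfl, rfl, -⟩⟩ := hT hxy
    · simp
    · simp

theorem sum_add_one_eq_card_V {f : β → ℕ} (hf : H.IsHypertree f) :
    ∑ e ∈ H.E, f e + 1 = #H.V := by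
  obtain ⟨T, ⟨hle, htree⟩, -, hdeg⟩ := hf
  have hsum := isBipartiteWith_sum_degrees_eq_card_edges' (isBipartiteWith_of_le_bip hle)
  have hedges : #T.edgeFinset + 1 = #H.V + #H.E := by
    simpa using htree.card_edgeFinset
  simp only [sum_map, Function.Embedding.inr_apply, ← degr_eq_degree, hdeg, sum_add_distrib,
    sum_const, card_univ, Fintype.card_coe, smul_eq_mul, mul_one] at hsum
  rw [← sum_coe_sort H.E f]
  omega

end

variable [o : LinearOrder β] (f : β → ℕ)

theorem internallyActive_of_isLeast {e : β} (he : IsLeast (H.E : Set β) e) :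
    H.InternallyActive o f e :=
  fun _ hx hlt _ => not_lt_of_ge (he.2 hx) hlt

theorem externallyActive_of_isLeast {e : β} (he : IsLeast (H.E : Set β) e) :
    H.ExternallyActive o f e :=
  fun _ hx hlt _ => not_lt_of_ge (he.2 hx) hlt

theorem pos_of_not_internallyActive {e : β} (h : ¬ H.InternallyActive o f e) : 0 < f e :=
  Nat.pos_of_ne_zero fun h0 => h fun _ _ _ htr => htr.1.ne' h0

theorem intInact_le_card_E_sub_one : H.intInact o f ≤ #H.E - 1 :=
  card_filter_le_card_sub_one_of_isLeast fun _ he => not_not.2 (internallyActive_of_isLeast f he)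

theorem extInact_le_card_E_sub_one : H.extInact o f ≤ #H.E - 1 :=
  card_filter_le_card_sub_one_of_isLeast fun _ he => not_not.2 (externallyActive_of_isLeast f he)

theorem intInact_le_sum : H.intInact o f ≤ ∑ e ∈ H.E, f e :=
  calc H.intInact o f = ∑ _ ∈ H.E.filter (¬ H.InternallyActive o f ·), 1 := card_eq_sum_ones _
    _ ≤ ∑ e ∈ H.E.filter (¬ H.InternallyActive o f ·), f e :=
      sum_le_sum fun _ he => pos_of_not_internallyActive f (mem_filter.1 he).2
    _ ≤ ∑ e ∈ H.E, f e := sum_le_sum_of_subset (filter_subset _ _)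

theorem intInact_le_card_V_sub_one {f : β → ℕ} (hf : H.IsHypertree f) :
    H.intInact o f ≤ #H.V - 1 := by
  have hle := intInact_le_sum (H := H) f
  have hsum := sum_add_one_eq_card_V hf
  omega

end Hypergraph'

theorem inactivity_bounds_general (H : Hypergraph' α β)
    (o : LinearOrder β) (f : β → ℕ) (hf : H.IsHypertree f) :
    H.intInact o f ≤ min H.E.card H.V.card - 1 ∧
    H.extInact o f ≤ H.E.card - 1 := by
  have hE := H.intInact_le_card_E_sub_one (o := o) f
  have hV := H.intInact_le_card_V_sub_one (o := o) hf
  exact ⟨by omega, H.extInact_le_card_E_sub_one f⟩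

/-- degree bounds: `ῑ(f) ≤ min{|E|,|V|} − 1` and `ε̄(f) ≤ |E| − 1`. -/
theorem inactivity_bounds (H : Hypergraph' α β) (hconn : H.Bip.Connected)
    (o : LinearOrder β) (f : β → ℕ) (hf : H.IsHypertree f) :
    H.intInact o f ≤ min H.E.card H.V.card - 1 ∧
    H.extInact o f ≤ H.E.card - 1 :=
  inactivity_bounds_general H o f hf
end
end

section
/- Let H = (V, E) be a hypergraph with Bip H connected, and construct H' from H by either (a) adding a singleton hyperedge e' = {v} to E for some v ∈ V, or (b) adding a new vertex v' to V and making it a member of exactly one hyperedge e ∈ E. Then in both cases I_{H'} = I_H and X_{H'} = X_H. -/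
/-!
Both operations hang a pendant vertex `w₀` on `Bip H` at a single vertex `u`: in case (a) `w₀` is
the new hyperedge `{v}` and `u = v`, in case (b) `w₀` is the new vertex `v'` and `u = e`. So the
spanning trees of `Bip H'` are exactly the spanning trees of `Bip H` with the edge `w₀u` added,
which gives `w₀` degree one and raises the degree of `u` by one. Hence the hypertrees of `H'` are
those of `H`, extended by `0` at the new hyperedge in case (a) and raised by one at `e` in case (b).
This bijection commutes with transfers of valence. In case (a) the new hyperedge can neither give
nor receive valence, so it is internally and externally active and does not change the activity of
any other hyperedge.
-/

open SimpleGraph Finset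
open scoped Classical

noncomputable section

variable {α β : Type} [DecidableEq α] [DecidableEq β]

/-- The hypergraph obtained from `H` by adding a new singleton hyperedge `{v}`
(with fresh index `b₀`). -/
def Hypergraph'.addSingleton (H : Hypergraph' α β) (b₀ : β) (v : α)
    (hv : v ∈ H.V) (hb : b₀ ∉ H.E) : Hypergraph' α β where
  V := H.V
  E := insert b₀ H.E
  incid := Function.update H.incid b₀ {v}
  incid_sub := by
    intro e he
    rcases Finset.mem_insert.mp he with rfl | he'
    · simpa [Function.update_self] using Finset.singleton_subset_iff.mpr hv
    · have hne : e ≠ b₀ := fun h => hb (h ▸ he')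
      rw [Function.update_of_ne hne]
      exact H.incid_sub e he'
  incid_nonempty := by
    intro e he
    rcases Finset.mem_insert.mp he with rfl | he'
    · simp [Function.update_self]
    · have hne : e ≠ b₀ := fun h => hb (h ▸ he')
      rw [Function.update_of_ne hne]
      exact H.incid_nonempty e he'

/-- The hypergraph obtained from `H` by adding a new vertex `v'` and making it a member
of exactly the one hyperedge `e`. -/
def Hypergraph'.addVertex (H : Hypergraph' α β) (v' : α) (e : β)
    (he : e ∈ H.E) (hv' : v' ∉ H.V) : Hypergraph' α β where
  V := insert v' H.V
  E := H.E
  incid := fun x => if x = e then insert v' (H.incid x) else H.incid x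
  incid_sub := by
    intro a ha
    try dsimp only
    by_cases h : a = e
    · rw [if_pos h]
      exact Finset.insert_subset_insert _ (H.incid_sub a ha)
    · rw [if_neg h]
      exact (H.incid_sub a ha).trans (Finset.subset_insert _ _)
  incid_nonempty := by
    intro a ha
    try dsimp only
    by_cases h : a = e
    · rw [if_pos h]
      exact Finset.insert_nonempty _ _
    · rw [if_neg h]
      exact H.incid_nonempty a ha

namespace SimpleGraph

variable {W W' : Type}

lemma isAcyclic_of_induce {G : SimpleGraph W} {s : Set W} (hs : ∀ x y, G.Adj x y → x ∈ s)
    (h : (G.induce s).IsAcyclic) : G.IsAcyclic := by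
  intro x c hc
  have hsupp : ∀ y ∈ c.support, y ∈ s := fun y hy =>
    let ⟨z, _, hyz⟩ := adj_of_mem_walk_support c hc.not_nil hy
    hs y z hyz
  refine h (c.induce s hsupp) ?_
  rw [← Walk.isCycle_map_iff_of_injective (f := (Embedding.induce (G := G) s).toHom)
    (Embedding.induce (G := G) s).injective, Walk.map_induce]
  exact hc

lemma IsAcyclic.map (f : W ↪ W') {G : SimpleGraph W} (h : G.IsAcyclic) : (G.map f).IsAcyclic :=
  isAcyclic_of_induce (s := Set.range f) (fun x y hxy => by
    obtain ⟨a, _, _, rfl, -⟩ := (map_adj f G x y).mp hxy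
    exact ⟨a, rfl⟩)
    ((Embedding.map f G).isoInduceRange.isAcyclic_iff.mp h)

variable (ι : W ↪ W') (w₀ : W') (u : W)

def addLeaf (T : SimpleGraph W) : SimpleGraph W' := T.map ι ⊔ edge w₀ (ι u)

variable {ι w₀ u}

lemma addLeaf_mono : Monotone (addLeaf ι w₀ u) :=
  fun _ _ h => sup_le_sup_right (map_monotone ι h) _

lemma comap_addLeaf (hw : w₀ ∉ Set.range ι) (T : SimpleGraph W) :
    (addLeaf ι w₀ u T).comap ι = T := by
  have : ∀ a, ι a ≠ w₀ := fun a h => hw ⟨a, h⟩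
  ext a b
  simp [addLeaf, edge_adj, this]

lemma neighborSet_addLeaf_self (hw : w₀ ∉ Set.range ι) (T : SimpleGraph W) :
    (addLeaf ι w₀ u T).neighborSet w₀ = {ι u} := by
  have : ∀ a, ι a ≠ w₀ := fun a h => hw ⟨a, h⟩
  ext x
  simp only [addLeaf, mem_neighborSet, sup_adj, map_adj, edge_adj, Set.mem_singleton_iff]
  grind

lemma neighborSet_addLeaf_apply (hw : w₀ ∉ Set.range ι) (T : SimpleGraph W) (a : W) :
    (addLeaf ι w₀ u T).neighborSet (ι a) =
      ι '' T.neighborSet a ∪ (if a = u then {w₀} else ∅) := by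
  have : ∀ a, ι a ≠ w₀ := fun a h => hw ⟨a, h⟩
  ext x
  by_cases hau : a = u
  · subst hau
    simp only [addLeaf, mem_neighborSet, sup_adj, map_adj, edge_adj, Set.mem_union,
      Set.mem_image, if_true, Set.mem_singleton_iff, ι.injective.eq_iff]
    grind
  · simp only [addLeaf, mem_neighborSet, sup_adj, map_adj, edge_adj, Set.mem_union,
      Set.mem_image, if_neg hau, Set.mem_empty_iff_false, ι.injective.eq_iff]
    grind

lemma degr_addLeaf_self (hw : w₀ ∉ Set.range ι) (T : SimpleGraph W) :
    degr (addLeaf ι w₀ u T) w₀ = 1 := by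
  rw [degr, neighborSet_addLeaf_self hw, Set.ncard_singleton]

lemma degr_addLeaf_apply [Finite W] (hw : w₀ ∉ Set.range ι) (T : SimpleGraph W) (a : W) :
    degr (addLeaf ι w₀ u T) (ι a) = degr T a + if a = u then 1 else 0 := by
  have hdisj : Disjoint (ι '' T.neighborSet a) (if a = u then {w₀} else ∅) := by
    split_ifs
    · exact Set.disjoint_singleton_right.mpr fun ⟨b, _, hb⟩ => hw ⟨b, hb⟩
    · exact Set.disjoint_empty _
  rw [degr, degr, neighborSet_addLeaf_apply hw,
    Set.ncard_union_eq hdisj (Set.toFinite _) (by split_ifs <;> simp),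
    Set.ncard_image_of_injective _ ι.injective]
  split_ifs <;> simp

lemma degr_pos_of_connected [Finite W] [Nontrivial W] {T : SimpleGraph W} (hT : T.Connected)
    (x : W) : 0 < degr T x := by
  rw [degr, Set.ncard_pos, neighborSet_nonempty]
  exact hT.preconnected.not_isIsolated x

lemma addLeaf_comap (hι : Set.range ι = {w₀}ᶜ) {T' : SimpleGraph W'}
    (hT' : T'.neighborSet w₀ = {ι u}) : addLeaf ι w₀ u (T'.comap ι) = T' := by
  have hw : w₀ ∉ Set.range ι := by simp [hι]
  have hleaf : ∀ y, (addLeaf ι w₀ u (T'.comap ι)).Adj w₀ y ↔ T'.Adj w₀ y := fun y => by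
    rw [← mem_neighborSet, ← mem_neighborSet, neighborSet_addLeaf_self hw, hT']
  ext x y
  by_cases hx : x = w₀
  · exact hx ▸ hleaf y
  by_cases hy : y = w₀
  · rw [adj_comm, hy, hleaf, adj_comm]
  obtain ⟨a, rfl⟩ : x ∈ Set.range ι := hι ▸ hx
  obtain ⟨b, rfl⟩ : y ∈ Set.range ι := hι ▸ hy
  rw [← comap_adj, comap_addLeaf hw, comap_adj]

lemma not_reachable_map_of_notMem_range (f : W ↪ W') (G : SimpleGraph W) {x : W'}
    (hx : x ∉ Set.range f) (a : W) : ¬ (G.map f).Reachable x (f a) := by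
  rintro ⟨p⟩
  have hne : x ≠ f a := fun h => hx ⟨a, h.symm⟩
  obtain ⟨b, -, -, hb, -⟩ := (map_adj f G _ _).mp (p.adj_snd (Walk.not_nil_of_ne hne))
  exact hx ⟨b, hb⟩

lemma IsTree.addLeaf (hι : Set.range ι = {w₀}ᶜ) {T : SimpleGraph W} (hT : T.IsTree) :
    (addLeaf ι w₀ u T).IsTree := by
  have hw : w₀ ∉ Set.range ι := by simp [hι]
  have reach : ∀ x, (SimpleGraph.addLeaf ι w₀ u T).Reachable x (ι u) := fun x => by
    by_cases hx : x = w₀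
    · subst hx
      refine Adj.reachable ?_
      rw [← mem_neighborSet, neighborSet_addLeaf_self hw]
      rfl
    · obtain ⟨a, rfl⟩ : x ∈ Set.range ι := hι ▸ hx
      exact (((hT.connected.preconnected a u).map (Embedding.map ι T).toHom).mono le_sup_left)
  have : Nonempty W' := ⟨w₀⟩
  exact ⟨⟨fun x y => (reach x).trans (reach y).symm⟩,
    (hT.isAcyclic.map ι).sup_edge_of_not_reachable (not_reachable_map_of_notMem_range ι T hw u)⟩

lemma IsTree.comap_of_subsingleton_neighborSet [Nonempty W] (hι : Set.range ι = {w₀}ᶜ)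
    {T' : SimpleGraph W'} (hT' : T'.IsTree) (hleaf : (T'.neighborSet w₀).Subsingleton) :
    (T'.comap ι).IsTree := by
  have hpre : (T'.induce (Set.range ι)).Preconnected :=
    hT'.connected.preconnected.induce_of_degree_eq_one fun v hv => by
      rw [hι, Set.notMem_compl_iff, Set.mem_singleton_iff] at hv
      exact hv ▸ hleaf
  exact ⟨(Connected.mk ((Embedding.comap ι T').isoInduceRange.preconnected_iff.mpr hpre)),
    hT'.isAcyclic.of_comap ι⟩

theorem isTree_le_iff_exists_addLeaf (hι : Set.range ι = {w₀}ᶜ) {G : SimpleGraph W}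
    {G' : SimpleGraph W'} (hG : G'.comap ι = G) (hG' : G'.neighborSet w₀ = {ι u})
    {T' : SimpleGraph W'} :
    T' ≤ G' ∧ T'.IsTree ↔ ∃ T, (T ≤ G ∧ T.IsTree) ∧ addLeaf ι w₀ u T = T' := by
  have : Nonempty W := ⟨u⟩
  have hw : w₀ ∉ Set.range ι := by simp [hι]
  constructor
  · rintro ⟨hle, hT'⟩
    have hsub : T'.neighborSet w₀ ⊆ {ι u} := hG' ▸ fun _ h => hle h
    have : Nontrivial W' := ⟨⟨w₀, ι u, fun h => hw ⟨u, h.symm⟩⟩⟩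
    have hleaf : T'.neighborSet w₀ = {ι u} :=
      (Set.Nonempty.subset_singleton_iff (by simp [hT'.connected.preconnected])).mp hsub
    exact ⟨T'.comap ι, ⟨hG ▸ comap_monotone ι hle,
      hT'.comap_of_subsingleton_neighborSet hι (hleaf ▸ Set.subsingleton_singleton)⟩,
      addLeaf_comap hι hleaf⟩
  · rintro ⟨T, ⟨hle, hT⟩, rfl⟩
    exact ⟨addLeaf_comap hι hG' ▸ hG ▸ addLeaf_mono hle, hT.addLeaf hι⟩

end SimpleGraph

namespace Hypergraph'

section

omit [DecidableEq α] [DecidableEq β]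

variable (H : Hypergraph' α β)

def label : H.V ⊕ H.E → α ⊕ β := Sum.map Subtype.val Subtype.val

/-- Incidence on labels: it lets the bipartite graphs of different hypergraphs be compared. -/
def incRel : α ⊕ β → α ⊕ β → Prop
  | .inl a, .inr e => a ∈ H.incid e
  | .inr e, .inl a => a ∈ H.incid e
  | _, _ => False

lemma bip_adj_iff {x y : H.V ⊕ H.E} :
    H.Bip.Adj x y ↔ H.incRel (H.label x) (H.label y) := by
  rcases x with x | x <;> rcases y with y | y <;> simp [Bip, incRel, label]

variable {H}

lemma IsHypertree.eq_zero_of_notMem {f : β → ℕ} (hf : H.IsHypertree f) {e : β}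
    (he : e ∉ H.E) : f e = 0 :=
  let ⟨_, _, hvan, _⟩ := hf
  hvan e he

lemma comap_bip_eq {H' : Hypergraph' α β} {ι : H.V ⊕ H.E ↪ H'.V ⊕ H'.E}
    (hι : ∀ x, H'.label (ι x) = H.label x)
    (hincid : ∀ (v : H.V) (e : H.E), (v : α) ∈ H'.incid e ↔ (v : α) ∈ H.incid e) :
    H'.Bip.comap ι = H.Bip := by
  ext x y
  rw [comap_adj, bip_adj_iff, bip_adj_iff, hι, hι]
  rcases x with x | x <;> rcases y with y | y <;> simp [incRel, label, hincid]

theorem isHypertree_iff_exists_isSpanningTree {H' : Hypergraph' α β}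
    {ι : H.V ⊕ H.E ↪ H'.V ⊕ H'.E} {w₀ : H'.V ⊕ H'.E} {u : H.V ⊕ H.E}
    (hι : Set.range ι = {w₀}ᶜ) (hcomap : H'.Bip.comap ι = H.Bip)
    (hleaf : H'.Bip.neighborSet w₀ = {ι u}) (g : β → ℕ) :
    H'.IsHypertree g ↔ ∃ T, H.IsSpanningTree T ∧ (∀ e, e ∉ H'.E → g e = 0) ∧
      ∀ e : H'.E, degr (addLeaf ι w₀ u T) (.inr e) = g e + 1 := by
  simp only [IsHypertree, Realizes, IsSpanningTree]
  constructor
  · rintro ⟨T', hT', hdeg⟩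
    obtain ⟨T, hT, rfl⟩ := (isTree_le_iff_exists_addLeaf hι hcomap hleaf).mp hT'
    exact ⟨T, hT, hdeg⟩
  · rintro ⟨T, hT, hdeg⟩
    exact ⟨_, (isTree_le_iff_exists_addLeaf hι hcomap hleaf).mpr ⟨T, hT, rfl⟩, hdeg⟩

lemma ncard_setOf_isHypertree_eq {H' : Hypergraph' α β} {φ : (β → ℕ) → β → ℕ}
    (hφ : φ.Injective) (hyp : ∀ g, H'.IsHypertree g ↔ ∃ f, H.IsHypertree f ∧ φ f = g)
    {s s' : (β → ℕ) → ℕ} (hs : ∀ f, H.IsHypertree f → s' (φ f) = s f) (k : ℕ) :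
    {g | H'.IsHypertree g ∧ s' g = k}.ncard = {f | H.IsHypertree f ∧ s f = k}.ncard := by
  have himage : {g | H'.IsHypertree g ∧ s' g = k} = φ '' {f | H.IsHypertree f ∧ s f = k} := by
    ext g
    simp only [Set.mem_ofPred_eq, Set.mem_image, hyp]
    constructor
    · rintro ⟨⟨f, hf, rfl⟩, hk⟩
      exact ⟨f, ⟨hf, hs f hf ▸ hk⟩, rfl⟩
    · rintro ⟨f, ⟨hf, hk⟩, rfl⟩
      exact ⟨⟨f, hf, rfl⟩, (hs f hf).trans hk⟩
  rw [himage, Set.ncard_image_of_injective _ hφ]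

end

section

omit [DecidableEq α]

variable {H : Hypergraph' α β}

lemma not_transferPossible_of_notMem_left {f : β → ℕ} (hf : H.IsHypertree f) {a : β}
    (ha : a ∉ H.E) (b : β) : ¬ H.TransferPossible f a b := fun ⟨hpos, _⟩ =>
  hpos.ne' (hf.eq_zero_of_notMem ha)

lemma not_transferPossible_of_notMem_right (f : β → ℕ) {a b : β} (hb : b ∉ H.E)
    (hab : a ≠ b) : ¬ H.TransferPossible f a b := fun ⟨_, hf⟩ => by
  simpa [transferFun, hab.symm] using hf.eq_zero_of_notMem hb

variable (H) (b₀ : β) (v : α) (hv : v ∈ H.V) (hb : b₀ ∉ H.E)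

lemma addSingleton_E : (H.addSingleton b₀ v hv hb).E = insert b₀ H.E := rfl

lemma addSingleton_incid_self : (H.addSingleton b₀ v hv hb).incid b₀ = {v} :=
  Function.update_self ..

lemma addSingleton_incid_of_mem {e : β} (he : e ∈ H.E) :
    (H.addSingleton b₀ v hv hb).incid e = H.incid e :=
  Function.update_of_ne (ne_of_mem_of_not_mem he hb) ..

def addSingletonEmb :
    H.V ⊕ H.E ↪ (H.addSingleton b₀ v hv hb).V ⊕ (H.addSingleton b₀ v hv hb).E :=
  (Function.Embedding.refl _).sumMap (Subtype.impEmbedding _ _ fun _ => mem_insert_of_mem)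

@[simp] lemma addSingletonEmb_inl (x : H.V) :
    H.addSingletonEmb b₀ v hv hb (.inl x) = .inl x := rfl

@[simp] lemma addSingletonEmb_inr (e : H.E) :
    H.addSingletonEmb b₀ v hv hb (.inr e) = .inr ⟨e, mem_insert_of_mem e.2⟩ := rfl

lemma range_addSingletonEmb :
    Set.range (H.addSingletonEmb b₀ v hv hb) =
      {.inr ⟨b₀, mem_insert_self b₀ H.E⟩}ᶜ := by
  ext x
  constructor
  · rintro ⟨y | ⟨y, hy⟩, rfl⟩
    · simp
    · simpa [Subtype.ext_iff] using ne_of_mem_of_not_mem hy hb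
  · rintro hx
    rcases x with x | ⟨x, hx'⟩
    · exact ⟨.inl x, rfl⟩
    · have hxb : x ≠ b₀ := by simpa [Subtype.ext_iff] using hx
      exact ⟨.inr ⟨x, (mem_insert.mp hx').resolve_left hxb⟩, rfl⟩

lemma comap_bip_addSingleton :
    (H.addSingleton b₀ v hv hb).Bip.comap (H.addSingletonEmb b₀ v hv hb) = H.Bip :=
  comap_bip_eq (by rintro (x | x) <;> rfl) fun _ e => by
    rw [addSingleton_incid_of_mem _ _ _ _ _ e.2]

lemma neighborSet_bip_addSingleton :
    (H.addSingleton b₀ v hv hb).Bip.neighborSet (.inr ⟨b₀, mem_insert_self b₀ H.E⟩) =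
      {H.addSingletonEmb b₀ v hv hb (.inl ⟨v, hv⟩)} := by
  ext (x | x)
  · simp only [mem_neighborSet, bip_adj_iff, label, Sum.map_inl, Sum.map_inr, incRel,
      addSingleton_incid_self, mem_singleton, Set.mem_singleton_iff, addSingletonEmb_inl]
    exact ⟨fun h => congrArg Sum.inl (Subtype.ext h),
      fun h => congrArg Subtype.val (Sum.inl_injective h)⟩
  · simp [bip_adj_iff, label, incRel]

theorem isHypertree_addSingleton_iff (g : β → ℕ) :
    (H.addSingleton b₀ v hv hb).IsHypertree g ↔ H.IsHypertree g := by
  have hι := H.range_addSingletonEmb b₀ v hv hb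
  have hw : Sum.inr ⟨b₀, mem_insert_self b₀ H.E⟩ ∉ Set.range (H.addSingletonEmb b₀ v hv hb) :=
    by simp [hι]
  rw [isHypertree_iff_exists_isSpanningTree hι (H.comap_bip_addSingleton b₀ v hv hb)
    (H.neighborSet_bip_addSingleton b₀ v hv hb)]
  refine exists_congr fun T => and_congr_right fun _ => ?_
  have hdeg_b₀ := degr_addLeaf_self (u := .inl ⟨v, hv⟩) hw T
  have hdeg : ∀ e : H.E, degr (addLeaf (H.addSingletonEmb b₀ v hv hb) _ (.inl ⟨v, hv⟩) T)
      (.inr ⟨e, mem_insert_of_mem e.2⟩) = degr T (.inr e) := fun e => by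
    simpa using degr_addLeaf_apply (u := .inl ⟨v, hv⟩) hw T (.inr e)
  constructor
  · rintro ⟨hvan, hdeg'⟩
    have hgb : g b₀ = 0 :=
      Nat.succ.inj ((hdeg' ⟨b₀, mem_insert_self b₀ H.E⟩).symm.trans hdeg_b₀)
    refine ⟨fun e he => ?_, fun e => (hdeg e).symm.trans (hdeg' _)⟩
    by_cases heb : e = b₀
    · exact heb ▸ hgb
    · exact hvan e (by simp [addSingleton_E, heb, he])
  · rintro ⟨hvan, hdeg'⟩
    refine ⟨fun e he => hvan e fun h => he (mem_insert_of_mem h), ?_⟩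
    rintro ⟨e, he⟩
    rcases mem_insert.mp he with rfl | he'
    · rw [hdeg_b₀, hvan _ hb]
    · exact (hdeg ⟨e, he'⟩).trans (hdeg' _)

lemma transferPossible_addSingleton_iff (f : β → ℕ) (a b : β) :
    (H.addSingleton b₀ v hv hb).TransferPossible f a b ↔ H.TransferPossible f a b := by
  simp only [TransferPossible, isHypertree_addSingleton_iff]

variable (o : LinearOrder β) {f : β → ℕ}

lemma internallyActive_addSingleton_iff {x : β} (hx : x ≠ b₀) :
    (H.addSingleton b₀ v hv hb).InternallyActive o f x ↔ H.InternallyActive o f x := by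
  simp only [InternallyActive, addSingleton_E, forall_mem_insert,
    transferPossible_addSingleton_iff]
  exact and_iff_right fun _ => not_transferPossible_of_notMem_right f hb hx

lemma internallyActive_addSingleton_self (hf : H.IsHypertree f) :
    (H.addSingleton b₀ v hv hb).InternallyActive o f b₀ := fun y _ _ =>
  (H.transferPossible_addSingleton_iff b₀ v hv hb f b₀ y).not.mpr
    (not_transferPossible_of_notMem_left hf hb y)

lemma externallyActive_addSingleton_iff (hf : H.IsHypertree f) (x : β) :
    (H.addSingleton b₀ v hv hb).ExternallyActive o f x ↔ H.ExternallyActive o f x := by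
  simp only [ExternallyActive, addSingleton_E, forall_mem_insert,
    transferPossible_addSingleton_iff]
  exact and_iff_right fun _ => not_transferPossible_of_notMem_left hf hb x

lemma externallyActive_addSingleton_self :
    (H.addSingleton b₀ v hv hb).ExternallyActive o f b₀ := fun y _ hy =>
  (H.transferPossible_addSingleton_iff b₀ v hv hb f y b₀).not.mpr
    (not_transferPossible_of_notMem_right f hb (@ne_of_lt _ o.toPreorder _ _ hy))

lemma intInact_addSingleton (hf : H.IsHypertree f) :
    (H.addSingleton b₀ v hv hb).intInact o f = H.intInact o f := by
  rw [intInact, intInact, addSingleton_E, filter_insert,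
    if_neg (not_not_intro (H.internallyActive_addSingleton_self b₀ v hv hb o hf))]
  exact congrArg card (filter_congr fun x hx =>
    (H.internallyActive_addSingleton_iff b₀ v hv hb o (ne_of_mem_of_not_mem hx hb)).not)

lemma extInact_addSingleton (hf : H.IsHypertree f) :
    (H.addSingleton b₀ v hv hb).extInact o f = H.extInact o f := by
  rw [extInact, extInact, addSingleton_E, filter_insert,
    if_neg (not_not_intro (H.externallyActive_addSingleton_self b₀ v hv hb o))]
  exact congrArg card (filter_congr fun x _ =>
    (H.externallyActive_addSingleton_iff b₀ v hv hb o hf x).not)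

end

section AddVertex

variable (H : Hypergraph' α β) (v' : α) (e : β) (he : e ∈ H.E) (hv' : v' ∉ H.V)

lemma addVertex_E : (H.addVertex v' e he hv').E = H.E := rfl

lemma addVertex_incid_self : (H.addVertex v' e he hv').incid e = insert v' (H.incid e) :=
  if_pos rfl

lemma addVertex_incid_of_ne {x : β} (hx : x ≠ e) :
    (H.addVertex v' e he hv').incid x = H.incid x :=
  if_neg hx

def addVertexEmb : H.V ⊕ H.E ↪ (H.addVertex v' e he hv').V ⊕ (H.addVertex v' e he hv').E :=
  (Subtype.impEmbedding _ _ fun _ => mem_insert_of_mem).sumMap (Function.Embedding.refl _)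

@[simp] lemma addVertexEmb_inl (x : H.V) :
    H.addVertexEmb v' e he hv' (.inl x) = .inl ⟨x, mem_insert_of_mem x.2⟩ := rfl

@[simp] lemma addVertexEmb_inr (x : H.E) : H.addVertexEmb v' e he hv' (.inr x) = .inr x := rfl

lemma range_addVertexEmb :
    Set.range (H.addVertexEmb v' e he hv') = {.inl ⟨v', mem_insert_self v' H.V⟩}ᶜ := by
  ext x
  constructor
  · rintro ⟨⟨y, hy⟩ | y, rfl⟩
    · simpa [Subtype.ext_iff] using ne_of_mem_of_not_mem hy hv'
    · simp
  · rintro hx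
    rcases x with ⟨x, hx'⟩ | x
    · have hxv : x ≠ v' := by simpa [Subtype.ext_iff] using hx
      exact ⟨.inl ⟨x, (mem_insert.mp hx').resolve_left hxv⟩, rfl⟩
    · exact ⟨.inr x, rfl⟩

lemma comap_bip_addVertex :
    (H.addVertex v' e he hv').Bip.comap (H.addVertexEmb v' e he hv') = H.Bip :=
  comap_bip_eq (by rintro (x | x) <;> rfl) fun w x => by
    by_cases hx : (x : β) = e
    · rw [hx, addVertex_incid_self, mem_insert, or_iff_right (ne_of_mem_of_not_mem w.2 hv')]
    · rw [addVertex_incid_of_ne _ _ _ _ _ hx]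

lemma neighborSet_bip_addVertex :
    (H.addVertex v' e he hv').Bip.neighborSet (.inl ⟨v', mem_insert_self v' H.V⟩) =
      {H.addVertexEmb v' e he hv' (.inr ⟨e, he⟩)} := by
  ext (x | ⟨x, hx⟩)
  · simp [bip_adj_iff, label, incRel]
  · have hincid : v' ∈ (H.addVertex v' e he hv').incid x ↔ x = e := by
      by_cases hxe : x = e
      · simp [hxe, addVertex_incid_self]
      · simpa [addVertex_incid_of_ne _ _ _ _ _ hxe, hxe] using fun h => hv' (H.incid_sub x hx h)
    simp only [mem_neighborSet, bip_adj_iff, label, Sum.map_inl, Sum.map_inr, incRel,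
      Set.mem_singleton_iff, addVertexEmb_inr, hincid]
    exact ⟨fun h => congrArg Sum.inr (Subtype.ext h),
      fun h => congrArg Subtype.val (Sum.inr_injective h)⟩

theorem isHypertree_addVertex_iff (g : β → ℕ) :
    (H.addVertex v' e he hv').IsHypertree g ↔
      ∃ f, H.IsHypertree f ∧ f + Pi.single e 1 = g := by
  have hι := H.range_addVertexEmb v' e he hv'
  have hw : Sum.inl ⟨v', mem_insert_self v' H.V⟩ ∉ Set.range (H.addVertexEmb v' e he hv') :=
    by simp [hι]
  have hdeg : ∀ (T : SimpleGraph (H.V ⊕ H.E)) (x : H.E),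
      degr (addLeaf (H.addVertexEmb v' e he hv') (.inl ⟨v', mem_insert_self v' H.V⟩)
        (.inr ⟨e, he⟩) T) (.inr x) = degr T (.inr x) + (Pi.single e 1 : β → ℕ) x := fun T x => by
    simpa [Pi.single_apply, Subtype.ext_iff] using
      degr_addLeaf_apply (u := .inr ⟨e, he⟩) hw T (.inr x)
  rw [isHypertree_iff_exists_isSpanningTree hι (H.comap_bip_addVertex v' e he hv')
    (H.neighborSet_bip_addVertex v' e he hv')]
  simp only [IsHypertree, Realizes]
  constructor
  · rintro ⟨T, hT, hvan, hdeg'⟩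
    have hdegT : ∀ x : H.E, degr T (.inr x) + (Pi.single e 1 : β → ℕ) x = g x + 1 :=
      fun x => (hdeg T x).symm.trans (hdeg' x)
    have hge : 1 ≤ g e := by
      obtain ⟨w, hw⟩ := H.incid_nonempty e he
      have : Nontrivial (H.V ⊕ H.E) :=
        nontrivial_of_ne (.inl ⟨w, H.incid_sub e he hw⟩) (.inr ⟨e, he⟩) Sum.inl_ne_inr
      have hpos := degr_pos_of_connected hT.2.connected (.inr ⟨e, he⟩)
      have := hdegT ⟨e, he⟩
      simp only [Pi.single_eq_same] at this
      omega
    refine ⟨g - Pi.single e 1, ⟨T, hT, fun x hx => by simp [hvan x hx], fun x => ?_⟩, ?_⟩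
    · have := hdegT x
      by_cases hx : (x : β) = e <;> simp [hx] at this ⊢ <;> omega
    · funext x
      by_cases hx : x = e <;> simp [hx]
      omega
  · rintro ⟨f, ⟨T, hT, hvan, hdeg'⟩, rfl⟩
    refine ⟨T, hT, fun x hx => ?_, fun x => ?_⟩
    · simp [hvan x hx, (ne_of_mem_of_not_mem he hx).symm]
    · have := hdeg' x
      exact (hdeg T x).trans (by rw [Pi.add_apply]; omega)

lemma isHypertree_add_single_iff (f : β → ℕ) :
    (H.addVertex v' e he hv').IsHypertree (f + Pi.single e 1) ↔ H.IsHypertree f :=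
  (H.isHypertree_addVertex_iff v' e he hv' _).trans
    ⟨fun ⟨_, hf', h⟩ => add_left_injective _ h ▸ hf', fun hf => ⟨f, hf, rfl⟩⟩

lemma pos_of_isHypertree_addVertex {g : β → ℕ} (hg : (H.addVertex v' e he hv').IsHypertree g) :
    0 < g e := by
  obtain ⟨f, -, rfl⟩ := (H.isHypertree_addVertex_iff v' e he hv' g).mp hg
  simp

lemma transferPossible_addVertex_iff (f : β → ℕ) (a b : β) :
    (H.addVertex v' e he hv').TransferPossible (f + Pi.single e 1) a b ↔
      H.TransferPossible f a b := by
  by_cases hfa : f a = 0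
  · refine iff_of_false (fun ⟨hpos, hg⟩ => ?_) fun h => h.1.ne' hfa
    have hae : a = e := by
      by_contra hae
      simp [hae, hfa] at hpos
    subst hae
    simpa [transferFun, hfa] using H.pos_of_isHypertree_addVertex v' a he hv' hg
  · have htransfer : transferFun (f + Pi.single e 1) a b = transferFun f a b + Pi.single e 1 := by
      funext x
      simp only [transferFun, Pi.add_apply, Pi.single_apply]
      split_ifs <;> grind
    simp only [TransferPossible, htransfer, isHypertree_add_single_iff, Pi.add_apply]
    exact and_congr_left fun _ => ⟨fun _ => Nat.pos_of_ne_zero hfa, fun h => by omega⟩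

variable (o : LinearOrder β) (f : β → ℕ)

lemma internallyActive_addVertex_iff (x : β) :
    (H.addVertex v' e he hv').InternallyActive o (f + Pi.single e 1) x ↔
      H.InternallyActive o f x := by
  simp only [InternallyActive, addVertex_E, transferPossible_addVertex_iff]

lemma externallyActive_addVertex_iff (x : β) :
    (H.addVertex v' e he hv').ExternallyActive o (f + Pi.single e 1) x ↔
      H.ExternallyActive o f x := by
  simp only [ExternallyActive, addVertex_E, transferPossible_addVertex_iff]

lemma intInact_addVertex :
    (H.addVertex v' e he hv').intInact o (f + Pi.single e 1) = H.intInact o f :=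
  congrArg card (filter_congr fun x _ => (H.internallyActive_addVertex_iff v' e he hv' o f x).not)

lemma extInact_addVertex :
    (H.addVertex v' e he hv').extInact o (f + Pi.single e 1) = H.extInact o f :=
  congrArg card (filter_congr fun x _ => (H.externallyActive_addVertex_iff v' e he hv' o f x).not)

end AddVertex

end Hypergraph'

theorem add_singleton_add_vertex_invariance_general (H : Hypergraph' α β)
    (o : LinearOrder β) (k : ℕ) :
    (∀ (b₀ : β) (hb : b₀ ∉ H.E) (v : α) (hv : v ∈ H.V),
      ({f : β → ℕ | (H.addSingleton b₀ v hv hb).IsHypertree f ∧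
          (H.addSingleton b₀ v hv hb).intInact o f = k}.ncard =
        {f : β → ℕ | H.IsHypertree f ∧ H.intInact o f = k}.ncard) ∧
      ({f : β → ℕ | (H.addSingleton b₀ v hv hb).IsHypertree f ∧
          (H.addSingleton b₀ v hv hb).extInact o f = k}.ncard =
        {f : β → ℕ | H.IsHypertree f ∧ H.extInact o f = k}.ncard)) ∧
    (∀ (v' : α) (hv' : v' ∉ H.V) (e : β) (he : e ∈ H.E),
      ({f : β → ℕ | (H.addVertex v' e he hv').IsHypertree f ∧
          (H.addVertex v' e he hv').intInact o f = k}.ncard =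
        {f : β → ℕ | H.IsHypertree f ∧ H.intInact o f = k}.ncard) ∧
      ({f : β → ℕ | (H.addVertex v' e he hv').IsHypertree f ∧
          (H.addVertex v' e he hv').extInact o f = k}.ncard =
        {f : β → ℕ | H.IsHypertree f ∧ H.extInact o f = k}.ncard)) := by
  refine ⟨fun b₀ hb v hv => ?_, fun v' hv' e he => ?_⟩
  · have hyp g : (H.addSingleton b₀ v hv hb).IsHypertree g ↔ ∃ f, H.IsHypertree f ∧ id f = g :=
      by simp [H.isHypertree_addSingleton_iff]
    exact ⟨H.ncard_setOf_isHypertree_eq Function.injective_id hyp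
        (fun _ hf => H.intInact_addSingleton b₀ v hv hb o hf) k,
      H.ncard_setOf_isHypertree_eq Function.injective_id hyp
        (fun _ hf => H.extInact_addSingleton b₀ v hv hb o hf) k⟩
  · have hφ := add_left_injective (Pi.single e 1 : β → ℕ)
    exact ⟨H.ncard_setOf_isHypertree_eq hφ (H.isHypertree_addVertex_iff v' e he hv')
        (fun f _ => H.intInact_addVertex v' e he hv' o f) k,
      H.ncard_setOf_isHypertree_eq hφ (H.isHypertree_addVertex_iff v' e he hv')
        (fun f _ => H.extInact_addVertex v' e he hv' o f) k⟩

/-- adding a singleton hyperedge, or adding a new vertex of valence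
one, changes neither the interior nor the exterior polynomial (stated
coefficientwise). -/
theorem add_singleton_add_vertex_invariance (H : Hypergraph' α β)
    (hconn : H.Bip.Connected) (o : LinearOrder β) (k : ℕ) :
    (∀ (b₀ : β) (hb : b₀ ∉ H.E) (v : α) (hv : v ∈ H.V),
      ({f : β → ℕ | (H.addSingleton b₀ v hv hb).IsHypertree f ∧
          (H.addSingleton b₀ v hv hb).intInact o f = k}.ncard =
        {f : β → ℕ | H.IsHypertree f ∧ H.intInact o f = k}.ncard) ∧
      ({f : β → ℕ | (H.addSingleton b₀ v hv hb).IsHypertree f ∧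
          (H.addSingleton b₀ v hv hb).extInact o f = k}.ncard =
        {f : β → ℕ | H.IsHypertree f ∧ H.extInact o f = k}.ncard)) ∧
    (∀ (v' : α) (hv' : v' ∉ H.V) (e : β) (he : e ∈ H.E),
      ({f : β → ℕ | (H.addVertex v' e he hv').IsHypertree f ∧
          (H.addVertex v' e he hv').intInact o f = k}.ncard =
        {f : β → ℕ | H.IsHypertree f ∧ H.intInact o f = k}.ncard) ∧
      ({f : β → ℕ | (H.addVertex v' e he hv').IsHypertree f ∧
          (H.addVertex v' e he hv').extInact o f = k}.ncard =
        {f : β → ℕ | H.IsHypertree f ∧ H.extInact o f = k}.ncard)) :=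
  add_singleton_add_vertex_invariance_general H o k
end
end
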